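/- arXiv:1408.6766 — 4 statements merged into one kernel-verified Lean document; each statement's English description precedes it below -/
import Mathlib

section
/- In the group algebra C[S_n], the k-th elementary symmetric polynomial evaluated at the Jucys–Murphy elements J_1, ..., J_n equals the sum of all conjugacy class sums C_μ over partitions μ of n with colength ℓ*(μ) = n − ℓ(μ) equal to k; that is, e_k(J_1, ..., J_n) = ∑_{μ ⊢ n, ℓ*(μ)=k} C_μ. -/
/-!
Expanding the ordered product `J_{b₁} ⋯ J_{bₖ}` (`b₁ < ⋯ < bₖ`) gives the sum of the products
`(a₁ b₁) ⋯ (aₖ bₖ)` over all `aᵢ < bᵢ`. Recording `aᵢ` as `f bᵢ` and letting `f` fix every other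
point, the terms of `e_k(J_1, …, J_n)` become the "codes" `f ≤ id` moving exactly `k` points, each
contributing `ofCode f = ∏_c (f c, c)` (in increasing order of `c`).

The map `ofCode` is injective on codes, because `f c` for the largest `c` is recovered as the
preimage of `c`, and there are `n!` codes, so it is a bijection onto `S_n`. Each nontrivial factor
`(f c, c)` joins the point `c`, fixed by the previous partial product, to another cycle, so
`ofCode f` has exactly `n - #{c | f c ≠ c}` cycles. Hence `e_k(J_1, …, J_n)` is the sum of all
permutations of colength `k`.
-/

open Finset

/-- The group algebra `ℂ[S_n]` of the symmetric group on `n` letters. -/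
abbrev GroupAlg (n : ℕ) := MonoidAlgebra ℂ (Equiv.Perm (Fin n))

/-- The Jucys–Murphy elements `J_b = ∑_{a < b} (a b)` of `ℂ[S_n]` (with `J_1 = 0`). -/
noncomputable def JM (n : ℕ) (b : Fin n) : GroupAlg n :=
  ∑ a ∈ Finset.univ.filter (fun a : Fin n => a < b),
    MonoidAlgebra.of ℂ (Equiv.Perm (Fin n)) (Equiv.swap a b)

/-- The class sum `C_μ ∈ ℂ[S_n]`: the sum of all permutations of cycle type `μ`. -/
noncomputable def classSum {n : ℕ} (μ : Nat.Partition n) : GroupAlg n :=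
  ∑ σ ∈ Finset.univ.filter
      (fun σ : Equiv.Perm (Fin n) => σ.partition.parts = μ.parts),
    MonoidAlgebra.of ℂ (Equiv.Perm (Fin n)) σ

/-- The `k`-th elementary symmetric polynomial evaluated at the Jucys–Murphy elements
`J_1, …, J_n` (the product over each subset is taken in increasing order, which is
immaterial since the Jucys–Murphy elements commute). -/
noncomputable def esymmJM (n k : ℕ) : GroupAlg n :=
  ∑ S ∈ (Finset.univ : Finset (Fin n)).powersetCard k,
    ((S.sort (· ≤ ·)).map (JM n)).prod

open Equiv Equiv.Perm

theorem List.prod_map_sum_eq_sum_piFinset {α β R : Type*} [DecidableEq α] [Fintype α]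
    [Semiring R] {L : List α} (hL : L.Nodup) (t : α → Finset β) (d : α → β)
    (g : α → β → R) :
    (L.map fun b => ∑ a ∈ t b, g b a).prod =
      ∑ f ∈ Fintype.piFinset fun c => if c ∈ L then t c else {d c},
        (L.map fun b => g b (f b)).prod := by
  induction L with
  | nil => simp [Fintype.piFinset_singleton]
  | cons b L ih =>
    obtain ⟨hbL, hL⟩ := List.nodup_cons.1 hL
    have hmap : ∀ f : α → β, ∀ a, (L.map fun c => g c (Function.update f b a c)) =
        L.map fun c => g c (f c) :=
      fun f a => List.map_congr_left fun c hc => by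
        rw [Function.update_of_ne (ne_of_mem_of_not_mem hc hbL)]
    rw [List.map_cons, List.prod_cons, ih hL, Finset.sum_mul_sum, ← sum_product']
    symm
    -- Split off the choice `f b` made in the first factor.
    refine sum_nbij' (fun f => (f b, Function.update f b (d b)))
      (fun p => Function.update p.2 b p.1) ?_ ?_ ?_ ?_ ?_
    · intro f hf
      simp only [Fintype.mem_piFinset] at hf
      simp only [Finset.mem_product, Fintype.mem_piFinset]
      refine ⟨by simpa using hf b, fun c => ?_⟩
      rcases eq_or_ne c b with rfl | hcb
      · simp [hbL]
      · simpa [Function.update_of_ne hcb, hcb] using hf c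
    · rintro ⟨a, f⟩ hp
      simp only [Finset.mem_product, Fintype.mem_piFinset] at hp
      simp only [Fintype.mem_piFinset]
      intro c
      rcases eq_or_ne c b with rfl | hcb
      · simpa using hp.1
      · simpa [Function.update_of_ne hcb, hcb] using hp.2 c
    · intro f _
      simp
    · rintro ⟨a, f⟩ hp
      simp only [Finset.mem_product, Fintype.mem_piFinset] at hp
      have hfb := hp.2 b
      rw [if_neg hbL, Finset.mem_singleton] at hfb
      simp [← hfb]
    · intro f _
      simp only [List.map_cons, List.prod_cons, hmap]

theorem Finset.filter_sort {α : Type*} [LinearOrder α] (s : Finset α) (p : α → Prop)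
    [DecidablePred p] : (s.sort (· ≤ ·)).filter p = (s.filter p).sort (· ≤ ·) :=
  ((sortedLT_sort s).pairwise.filter _).sortedLT.eq_of_mem_iff (sortedLT_sort _) (by simp)

namespace Equiv.Perm

variable {α : Type*}

theorem SameCycle.of_forall_sameCycle_apply {g h : Perm α} (step : ∀ x, h.SameCycle x (g x))
    {x y : α} (hxy : g.SameCycle x y) : h.SameCycle x y := by
  obtain ⟨i, rfl⟩ := hxy
  induction i using Int.induction_on with
  | zero => exact SameCycle.refl _ _
  | succ i ih => rw [add_comm, zpow_add, zpow_one, mul_apply]; exact ih.trans (step _)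
  | pred i ih =>
    rw [sub_eq_neg_add, zpow_add, zpow_neg_one, mul_apply]
    exact ih.trans (by simpa using (step (g⁻¹ ((g ^ (-(i : ℤ))) x))).symm)

theorem apply_ne_of_apply_ne_of_apply_eq {g : Perm α} {a b : α} (ha : g a ≠ a) (hb : g b = b) :
    g a ≠ b :=
  fun h => ha (by rw [g.injective (h.trans hb.symm), hb])

variable [DecidableEq α]

theorem support_mul_swap_of_apply_ne_of_apply_eq [Fintype α] {g : Perm α} {a b : α}
    (ha : g a ≠ a) (hb : g b = b) : (g * swap a b).support = insert b g.support := by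
  ext x
  rcases eq_or_ne x b with rfl | hxb
  · simp [apply_ne_of_apply_ne_of_apply_eq ha hb]
  rcases eq_or_ne x a with rfl | hxa
  · simp [hb, hxb.symm, ha]
  · simp [swap_apply_of_ne_of_ne hxa hxb, hxb]

theorem IsCycle.mul_swap_of_apply_ne_of_apply_eq {g : Perm α} (hg : g.IsCycle) {a b : α}
    (ha : g a ≠ a) (hb : g b = b) : (g * swap a b).IsCycle := by
  set h := g * swap a b with h_def
  have hha : h a = b := by simp [h_def, hb]
  have hhb : h b = g a := by simp [h_def]
  have step : ∀ x, h.SameCycle x (g x) := by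
    intro x
    rcases eq_or_ne x b with rfl | hxb
    · rw [hb]
    rcases eq_or_ne x a with rfl | hxa
    · rw [← hhb, ← hha]
      exact sameCycle_apply_right.2 (sameCycle_apply_right.2 (SameCycle.refl _ _))
    · have : h x = g x := by simp [h_def, swap_apply_of_ne_of_ne hxa hxb]
      rw [← this]
      exact sameCycle_apply_right.2 (SameCycle.refl _ _)
  refine ⟨b, hhb ▸ apply_ne_of_apply_ne_of_apply_eq ha hb, fun y hy => ?_⟩
  rcases eq_or_ne y b with rfl | hyb
  · exact SameCycle.refl _ _
  have hba : h.SameCycle b a := by rw [← hha]; exact sameCycle_apply_left.2 (SameCycle.refl _ _)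
  rcases eq_or_ne y a with rfl | hya
  · exact hba
  have hgy : g y ≠ y := by simpa [h_def, swap_apply_of_ne_of_ne hya hyb] using hy
  exact hba.trans ((hg.sameCycle ha hgy).of_forall_sameCycle_apply step)

theorem card_cycleType_mul_swap_of_apply_ne_of_apply_eq [Fintype α] {τ : Perm α} {a b : α}
    (ha : τ a ≠ a) (hb : τ b = b) :
    Multiset.card (τ * swap a b).cycleType = Multiset.card τ.cycleType := by
  set g := τ.cycleOf a
  have hg : g.IsCycle := isCycle_cycleOf τ ha
  have hga : g a ≠ a := by rwa [cycleOf_apply_self]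
  have hgb : g b = b := by rw [cycleOf_apply]; split_ifs <;> simp [hb]
  have hd : Disjoint (τ * g⁻¹) g :=
    disjoint_mul_inv_of_mem_cycleFactorsFinset
      (cycleOf_mem_cycleFactorsFinset_iff.mpr (mem_support.2 ha))
  have hd' : Disjoint (τ * g⁻¹) (g * swap a b) := by
    rw [disjoint_iff_disjoint_support, support_mul_swap_of_apply_ne_of_apply_eq hga hgb,
      Finset.disjoint_insert_right, notMem_support]
    refine ⟨?_, disjoint_iff_disjoint_support.1 hd⟩
    rw [mul_apply, inv_eq_iff_eq.2 hgb.symm, hb]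
  calc Multiset.card (τ * swap a b).cycleType
      = Multiset.card ((τ * g⁻¹) * (g * swap a b)).cycleType := by group
    _ = Multiset.card (τ * g⁻¹).cycleType + 1 := by
      rw [hd'.cycleType_mul, Multiset.card_add,
        card_cycleType_eq_one.2 (hg.mul_swap_of_apply_ne_of_apply_eq hga hgb)]
    _ = Multiset.card τ.cycleType := by
      rw [← card_cycleType_eq_one.2 hg, ← Multiset.card_add, ← hd.cycleType_mul,
        inv_mul_cancel_right]

theorem card_parts_partition_mul_swap [Fintype α] {τ : Perm α} {a b : α} (hab : a ≠ b)
    (hb : τ b = b) :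
    Multiset.card (τ * swap a b).partition.parts + 1 = Multiset.card τ.partition.parts := by
  simp only [parts_partition, Multiset.card_add, Multiset.card_replicate]
  have hle := (τ * swap a b).support.card_le_univ
  by_cases ha : τ a = a
  · have hd : Disjoint τ (swap a b) := by
      rw [disjoint_iff_disjoint_support, support_swap hab]
      simp [ha, hb]
    rw [hd.cycleType_mul, Multiset.card_add, card_cycleType_eq_one.2 (isCycle_swap hab),
      hd.card_support_mul, card_support_swap hab] at *
    omega
  · rw [card_cycleType_mul_swap_of_apply_ne_of_apply_eq ha hb,
      support_mul_swap_of_apply_ne_of_apply_eq ha hb,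
      Finset.card_insert_of_notMem (notMem_support.2 hb)] at *
    omega

end Equiv.Perm

section ProdSwaps

variable {α : Type*} [DecidableEq α]

def prodSwaps (f : α → α) (L : List α) : Perm α :=
  (L.map fun c => swap (f c) c).prod

@[simp] theorem prodSwaps_nil (f : α → α) : prodSwaps f [] = 1 := rfl

theorem prodSwaps_cons (f : α → α) (c : α) (L : List α) :
    prodSwaps f (c :: L) = swap (f c) c * prodSwaps f L := List.prod_cons

theorem prodSwaps_concat (f : α → α) (L : List α) (c : α) :
    prodSwaps f (L ++ [c]) = prodSwaps f L * swap (f c) c := by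
  simp [prodSwaps]

theorem prodSwaps_apply_of_forall_ne {f : α → α} {L : List α} {x : α}
    (h : ∀ c ∈ L, f c ≠ x ∧ c ≠ x) : prodSwaps f L x = x := by
  induction L with
  | nil => rfl
  | cons c L ih =>
    rw [prodSwaps_cons, mul_apply, ih fun d hd => h d (List.mem_cons_of_mem _ hd),
      swap_apply_of_ne_of_ne (h c List.mem_cons_self).1.symm (h c List.mem_cons_self).2.symm]

theorem prodSwaps_filter {f : α → α} {L : List α} (p : α → Bool)
    (h : ∀ c ∈ L, p c = false → f c = c) : prodSwaps f (L.filter p) = prodSwaps f L := by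
  induction L with
  | nil => rfl
  | cons c L ih =>
    have ih := ih fun d hd => h d (List.mem_cons_of_mem _ hd)
    cases hc : p c
    · rw [List.filter_cons_of_neg (by simp [hc]), prodSwaps_cons, h c List.mem_cons_self hc,
        swap_self, ih, ← Perm.one_def, one_mul]
    · rw [List.filter_cons_of_pos hc, prodSwaps_cons, prodSwaps_cons, ih]

end ProdSwaps

section Codes

variable {α : Type*} [LinearOrder α]

theorem card_parts_partition_prodSwaps_add [Fintype α] {f : α → α} {L : List α}
    (hL : L.Pairwise (· < ·)) (hf : ∀ c ∈ L, f c ≤ c) :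
    Multiset.card (prodSwaps f L).partition.parts + (L.filter fun c => f c ≠ c).length =
      Fintype.card α := by
  induction L using List.reverseRecOn with
  | nil => simp [parts_partition]
  | append_singleton L b ih =>
    obtain ⟨hL, -, hlt⟩ := List.pairwise_append.1 hL
    have ih := ih hL fun c hc => hf c (List.mem_append_left _ hc)
    rw [prodSwaps_concat, List.filter_append, List.length_append]
    by_cases hfb : f b = b
    · have hnil : ([b].filter fun c => f c ≠ c) = [] := by simp [hfb]
      rw [hfb, swap_self, ← Perm.one_def, mul_one, hnil, List.length_nil, add_zero, ih]
    · have hfix : prodSwaps f L b = b := prodSwaps_apply_of_forall_ne fun c hc =>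
        have hcb : c < b := hlt c hc b (List.mem_singleton_self b)
        ⟨((hf c (List.mem_append_left _ hc)).trans_lt hcb).ne, hcb.ne⟩
      have := card_parts_partition_mul_swap hfb hfix
      have hone : ([b].filter fun c => f c ≠ c).length = 1 := by simp [hfb]
      omega

theorem eqOn_of_prodSwaps_eq {f g : α → α} {L : List α} (hL : L.Pairwise (· < ·))
    (hf : ∀ c ∈ L, f c ≤ c) (hg : ∀ c ∈ L, g c ≤ c) (h : prodSwaps f L = prodSwaps g L) :
    ∀ c ∈ L, f c = g c := by
  induction L using List.reverseRecOn with
  | nil => simp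
  | append_singleton L b ih =>
    obtain ⟨hL, -, hlt⟩ := List.pairwise_append.1 hL
    have fix : ∀ k : α → α, (∀ c ∈ L ++ [b], k c ≤ c) → prodSwaps k L b = b :=
      fun k hk => prodSwaps_apply_of_forall_ne fun c hc =>
        have hcb : c < b := hlt c hc b (List.mem_singleton_self b)
        ⟨((hk c (List.mem_append_left _ hc)).trans_lt hcb).ne, hcb.ne⟩
    rw [prodSwaps_concat, prodSwaps_concat] at h
    have hb : f b = g b := by
      have hfb := congrArg (· (f b)) h
      have hgb : (prodSwaps g L * swap (g b) b) (g b) = b := by simp [fix g hg]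
      simp only [mul_apply, swap_apply_left, fix f hf] at hfb
      exact (prodSwaps g L * swap (g b) b).injective (hfb.symm.trans hgb.symm)
    rw [hb] at h
    have ih := ih hL (fun c hc => hf c (List.mem_append_left _ hc))
      (fun c hc => hg c (List.mem_append_left _ hc)) (mul_right_cancel h)
    intro c hc
    rcases List.mem_append.1 hc with hc | hc
    · exact ih c hc
    · rwa [List.mem_singleton.1 hc]

variable [Fintype α]

def ofCode (f : α → α) : Perm α := prodSwaps f (univ.sort (· ≤ ·))

theorem prodSwaps_sort_eq_ofCode {f : α → α} {S : Finset α} (hf : ∀ c ∉ S, f c = c) :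
    prodSwaps f (S.sort (· ≤ ·)) = ofCode f := by
  have hS : S.sort (· ≤ ·) = (univ.sort (· ≤ ·)).filter (· ∈ S) := by
    rw [filter_sort, filter_mem_eq_inter, univ_inter]
  rw [hS, prodSwaps_filter _ fun c _ hc => hf c (by simpa using hc), ofCode]

theorem card_parts_partition_ofCode_add {f : α → α} (hf : f ≤ id) :
    Multiset.card (ofCode f).partition.parts + #{c | f c ≠ c} = Fintype.card α := by
  have := card_parts_partition_prodSwaps_add (sortedLT_sort univ).pairwise fun c _ => hf c
  rwa [filter_sort, length_sort] at this

theorem ofCode_injOn : Set.InjOn ofCode (Set.Iic (id : α → α)) := fun _ hf _ hg h =>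
  funext fun c => eqOn_of_prodSwaps_eq (sortedLT_sort univ).pairwise (fun c _ => hf c)
    (fun c _ => hg c) h c (mem_sort _ |>.2 (mem_univ c))

end Codes

theorem Fin.card_Iic_id (n : ℕ) : #(Iic (id : Fin n → Fin n)) = n.factorial := by
  rw [Pi.card_Iic]
  simp only [id, Fin.card_Iic]
  rw [Fin.prod_univ_eq_prod_range (· + 1), prod_range_add_one_eq_factorial]

theorem sum_Iic_id_ofCode {n : ℕ} {M : Type*} [AddCommMonoid M] (F : Perm (Fin n) → M) :
    ∑ f ∈ Iic id, F (ofCode f) = ∑ σ, F σ := by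
  have hinj : Set.InjOn ofCode (Iic (id : Fin n → Fin n) : Set (Fin n → Fin n)) := by
    simpa using ofCode_injOn
  refine sum_nbij ofCode (fun _ _ => mem_univ _) hinj ?_ fun _ _ => rfl
  refine surjOn_of_injOn_of_card_le _ (fun _ _ => mem_univ _) hinj ?_
  rw [card_univ, Fintype.card_perm, Fintype.card_fin, Fin.card_Iic_id]

theorem card_filter_ne_eq_sub_card_parts_ofCode {n : ℕ} {f : Fin n → Fin n} (hf : f ≤ id) :
    #{c | f c ≠ c} = n - Multiset.card (ofCode f).partition.parts := by
  have := card_parts_partition_ofCode_add hf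
  have := Fintype.card_fin n
  omega

def Equiv.Perm.cycleTypePartition {n : ℕ} (σ : Perm (Fin n)) : n.Partition where
  parts := σ.partition.parts
  parts_pos := σ.partition.parts_pos
  parts_sum := by rw [σ.partition.parts_sum, Fintype.card_fin]

theorem prod_map_JM_sort {n : ℕ} (S : Finset (Fin n)) :
    ((S.sort (· ≤ ·)).map (JM n)).prod =
      ∑ f ∈ Iic id with ({c | f c ≠ c} : Finset (Fin n)) = S, MonoidAlgebra.of ℂ _ (ofCode f) := by
  refine (List.prod_map_sum_eq_sum_piFinset (sort_nodup _ _) (fun b => {a | a < b}) id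
    fun b a => MonoidAlgebra.of ℂ _ (swap a b)).trans (sum_congr ?_ fun f hf => ?_)
  · ext f
    simp only [Fintype.mem_piFinset, mem_sort, mem_filter, mem_Iic, Finset.ext_iff, mem_univ,
      true_and, Pi.le_def, id, ← forall_and]
    refine forall_congr' fun c => ?_
    by_cases hc : c ∈ S <;> simp +contextual [hc, lt_iff_le_and_ne]
  · rw [mem_filter, Finset.ext_iff] at hf
    rw [← prodSwaps_sort_eq_ofCode (S := S) fun c hc => by simpa [hc] using hf.2 c, prodSwaps,
      map_list_prod, List.map_map]
    rfl

/-- Jucys: `e_k(J_1, …, J_n) = ∑_{μ ⊢ n, ℓ*(μ) = k} C_μ`, where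
`ℓ*(μ) = n - ℓ(μ)` is the colength. -/
theorem esymm_jucysMurphy_eq_sum_classSums (n k : ℕ) :
    esymmJM n k =
      ∑ μ ∈ Finset.univ.filter
          (fun μ : Nat.Partition n => n - Multiset.card μ.parts = k),
        classSum μ := by
  calc esymmJM n k
      = ∑ S ∈ univ.powersetCard k, ∑ f ∈ Iic id with ({c | f c ≠ c} : Finset (Fin n)) = S,
          MonoidAlgebra.of ℂ _ (ofCode f) := sum_congr rfl fun S _ => prod_map_JM_sort S
    _ = ∑ f ∈ Iic id with #{c | f c ≠ c} = k, MonoidAlgebra.of ℂ _ (ofCode f) := by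
      rw [sum_fiberwise_eq_sum_filter]
      simp only [mem_powersetCard_univ]
    _ = ∑ σ with n - Multiset.card σ.partition.parts = k, MonoidAlgebra.of ℂ _ σ := by
      rw [sum_filter, sum_filter, ← sum_Iic_id_ofCode]
      exact sum_congr rfl fun f hf => by
        rw [card_filter_ne_eq_sub_card_parts_ofCode (mem_Iic.1 hf)]
    _ = ∑ μ ∈ univ.filter fun μ : n.Partition => n - Multiset.card μ.parts = k,
          ∑ σ with cycleTypePartition σ = μ, MonoidAlgebra.of ℂ _ σ := by
      rw [sum_fiberwise_eq_sum_filter]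
      simp [cycleTypePartition]
    _ = _ := by
      simp only [classSum, Nat.Partition.ext_iff]
      rfl
end

section
/- Every symmetric polynomial in the Jucys–Murphy elements J_1, ..., J_n lies in the center Z(C[S_n]) of the group algebra of the symmetric group S_n. -/
open Finset

/-- Substitution of the Jucys–Murphy elements `J_1, …, J_n` into a multivariate
polynomial `f` (monomials are expanded as ordered products `J_1^{m_1} ⋯ J_n^{m_n}`,
which is immaterial since the Jucys–Murphy elements commute). -/
noncomputable def evalJM {n : ℕ} (f : MvPolynomial (Fin n) ℂ) : GroupAlg n :=
  ∑ m ∈ f.support,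
    f.coeff m • ((List.finRange n).map (fun i => JM n i ^ m i)).prod

/-!
Every permutation is a product of adjacent transpositions `s = (i i+1)`, so it suffices that `s`
commutes with `f(J)`. Now `s` commutes with `J_b` for `b ≠ i, i+1`, and `s J_i s + s = J_{i+1}`
together with `s² = 1` makes `s` commute with `J_i + J_{i+1}` and `J_i J_{i+1}`. Every elementary
symmetric polynomial in the `J_b` is a polynomial in these, hence commutes with `s`, and by the
fundamental theorem of symmetric polynomials so does `f(J)`.
-/

section Esymm

variable {R S : Type*} [CommSemiring R] [SetLike S R] [SubsemiringClass S R]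

theorem Multiset.esymm_cons_succ (a : R) (m : Multiset R) (k : ℕ) :
    (a ::ₘ m).esymm (k + 1) = m.esymm (k + 1) + a * m.esymm k := by
  simp only [Multiset.esymm, Multiset.powersetCard_cons, Multiset.map_add, Multiset.sum_add,
    Multiset.map_map, Function.comp_def, Multiset.prod_cons, Multiset.sum_map_mul_left]

theorem Multiset.esymm_mem {s : S} {m : Multiset R} (hm : ∀ x ∈ m, x ∈ s) (k : ℕ) :
    m.esymm k ∈ s :=
  multiset_sum_mem _ fun _ hp ↦ by
    obtain ⟨u, hu, rfl⟩ := Multiset.mem_map.1 hp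
    exact multiset_prod_mem _ fun x hx ↦
      hm x (Multiset.mem_of_le (Multiset.mem_powersetCard.1 hu).1 hx)

-- `e_{k+2}(a, b, m) = e_{k+2}(m) + (a + b) e_{k+1}(m) + a b e_k(m)`
theorem Multiset.esymm_cons_cons_mem {s : S} {a b : R} {m : Multiset R} (hm : ∀ x ∈ m, x ∈ s)
    (hadd : a + b ∈ s) (hmul : a * b ∈ s) (k : ℕ) : (a ::ₘ b ::ₘ m).esymm k ∈ s := by
  have he := Multiset.esymm_mem hm
  rcases k with _ | _ | k
  · simp [Multiset.esymm, one_mem s]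
  · rw [Multiset.esymm_cons_succ, Multiset.esymm_cons_succ]
    simpa [Multiset.esymm, add_assoc, add_comm b a] using add_mem (he 1) hadd
  · rw [Multiset.esymm_cons_succ, Multiset.esymm_cons_succ, Multiset.esymm_cons_succ]
    convert add_mem (add_mem (he (k + 2)) (mul_mem hadd (he (k + 1)))) (mul_mem hmul (he k))
      using 1
    ring

end Esymm

theorem MvPolynomial.IsSymmetric.aeval_mem {σ R A : Type*} [Fintype σ] [CommRing R]
    [CommSemiring A] [Algebra R A] {f : MvPolynomial σ R} (hf : f.IsSymmetric) (x : σ → A)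
    {B : Subalgebra R A} (hB : ∀ k, aeval x (esymm σ R k) ∈ B) : aeval x f ∈ B := by
  obtain ⟨g, hg⟩ := esymmAlgHom_surjective R le_rfl ⟨f, (mem_symmetricSubalgebra f).2 hf⟩
  have hfg : aeval (fun i : Fin _ ↦ esymm σ R (i + 1)) g = f :=
    (esymmAlgHom_apply g).symm.trans (congrArg Subtype.val hg)
  rw [← hfg, ← AlgHom.comp_apply, comp_aeval]
  have hmem := AlgHom.mem_range_self (aeval fun i : Fin _ ↦ aeval x (esymm σ R (i + 1))) g
  rw [aeval_range] at hmem
  exact Algebra.adjoin_le (Set.range_subset_iff.2 fun _ ↦ hB _) hmem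

theorem MonoidAlgebra.mem_center_of_closure_eq_top {k G : Type*} [CommSemiring k] [Monoid G]
    {s : Set G} (hs : Submonoid.closure s = ⊤) {x : MonoidAlgebra k G}
    (hx : ∀ g ∈ s, Commute (of k G g) x) : x ∈ Subalgebra.center k (MonoidAlgebra k G) := by
  have hG (g : G) : Commute (of k G g) x := by
    induction hs ▸ Submonoid.mem_top g using Submonoid.closure_induction with
    | mem g hg => exact hx g hg
    | one => simp
    | mul g h _ _ hg hh => simpa using hg.mul_left hh
  rw [Subalgebra.mem_center_iff]
  intro y
  induction y using MonoidAlgebra.induction_on with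
  | of g => exact hG g
  | add y z hy hz => rw [add_mul, mul_add, hy, hz]
  | smul r y hy => rw [smul_mul_assoc, mul_smul_comm, hy]

theorem Equiv.Perm.mclosure_swap_adjacent (n : ℕ) :
    Submonoid.closure {σ : Perm (Fin n) | ∃ i j : Fin n, (j : ℕ) = i + 1 ∧ σ = swap i j} =
      ⊤ := by
  cases n with
  | zero => exact Subsingleton.elim _ _
  | succ m =>
    rw [eq_top_iff, ← mclosure_swap_castSucc_succ]
    refine Submonoid.closure_mono ?_
    rintro _ ⟨t, rfl⟩
    exact ⟨t.castSucc, t.succ, by simp, rfl⟩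

section Conj

variable {R : Type*} [Ring R] {s a b : R}

theorem mul_eq_of_mul_mul_add_eq (hs : s * s = 1) (h : s * a * s + s = b) :
    s * a = b * s - 1 ∧ s * b = a * s + 1 := by
  constructor
  · rw [← h, add_mul, mul_assoc _ s, hs, mul_one, add_sub_cancel_right]
  · rw [← h, mul_add, ← mul_assoc, ← mul_assoc, hs, one_mul]

theorem commute_add_of_mul_mul_add_eq (hs : s * s = 1) (h : s * a * s + s = b) :
    Commute s (a + b) := by
  obtain ⟨ha, hb⟩ := mul_eq_of_mul_mul_add_eq hs h
  rw [Commute, SemiconjBy, mul_add, ha, hb]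
  noncomm_ring

theorem commute_mul_of_mul_mul_add_eq (hs : s * s = 1) (h : s * a * s + s = b)
    (hab : Commute a b) : Commute s (a * b) := by
  obtain ⟨ha, hb⟩ := mul_eq_of_mul_mul_add_eq hs h
  calc s * (a * b) = b * (s * b) - b := by rw [← mul_assoc, ha]; noncomm_ring
    _ = a * b * s := by rw [hb, hab.eq]; noncomm_ring

end Conj

open Equiv MonoidAlgebra

variable {n : ℕ}

theorem commute_of_perm_JM {σ : Perm (Fin n)} {b : Fin n} (hb : σ b = b)
    (hσ : ∀ y, σ y < b ↔ y < b) : Commute (of ℂ _ σ) (JM n b) := by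
  unfold JM
  rw [Commute, SemiconjBy, mul_sum, sum_mul]
  refine Finset.sum_equiv σ (by simp [hσ]) fun a _ ↦ ?_
  rw [← map_mul, ← map_mul, mul_swap_eq_swap_mul, hb]

theorem commute_of_swap_JM {x y b : Fin n} (hx : x ≠ b) (hy : y ≠ b) (hxy : x < b ↔ y < b) :
    Commute (of ℂ _ (swap x y)) (JM n b) := by
  refine commute_of_perm_JM (swap_apply_of_ne_of_ne hx.symm hy.symm) fun z ↦ ?_
  rw [swap_apply_def]
  split_ifs with h₁ h₂ <;> simp_all

theorem JM_commute (a b : Fin n) : Commute (JM n a) (JM n b) := by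
  wlog hab : a < b generalizing a b
  · rcases (not_lt.1 hab).eq_or_lt with rfl | hba
    · exact Commute.refl _
    · exact (this b a hba).symm
  refine Commute.sum_left _ _ _ fun x hx ↦ ?_
  have hxa : x < a := by simpa using hx
  exact commute_of_swap_JM (hxa.trans hab).ne hab.ne (iff_of_true (hxa.trans hab) hab)

section Adjacent

variable {i j : Fin n} (hij : (j : ℕ) = i + 1)
include hij

theorem swap_mul_JM_mul_swap_add :
    of ℂ _ (swap i j) * JM n i * of ℂ _ (swap i j) + of ℂ _ (swap i j) = JM n j := by
  have hlt : univ.filter (· < j) = insert i (univ.filter (· < i)) := by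
    ext a
    simp only [mem_filter, mem_univ, true_and, mem_insert, Fin.lt_def, Fin.ext_iff, hij]
    omega
  unfold JM
  rw [hlt, sum_insert (by simp), add_comm, mul_sum, sum_mul]
  congr 1
  refine sum_congr rfl fun a ha ↦ ?_
  have hai : a < i := by simpa using ha
  have haj : a ≠ j := Fin.ne_of_val_ne (by rw [Fin.lt_def] at hai; omega)
  rw [← map_mul, ← map_mul, swap_mul_swap_mul_swap hai.ne haj, swap_comm]

theorem commute_of_swap_JM_add : Commute (of ℂ _ (swap i j)) (JM n i + JM n j) :=
  commute_add_of_mul_mul_add_eq (by rw [← map_mul, swap_mul_self, map_one])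
    (swap_mul_JM_mul_swap_add hij)

theorem commute_of_swap_JM_mul : Commute (of ℂ _ (swap i j)) (JM n i * JM n j) :=
  commute_mul_of_mul_mul_add_eq (by rw [← map_mul, swap_mul_self, map_one])
    (swap_mul_JM_mul_swap_add hij) (JM_commute i j)

end Adjacent

noncomputable abbrev JMAlgebra (n : ℕ) : Subalgebra ℂ (GroupAlg n) :=
  Algebra.adjoin ℂ (Set.range (JM n))

instance : IsMulCommutative (JMAlgebra n) :=
  Algebra.isMulCommutative_adjoin ℂ <| by
    rintro _ ⟨a, rfl⟩ _ ⟨b, rfl⟩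
    exact JM_commute a b

noncomputable def JMAlgebra.gen (n : ℕ) (b : Fin n) : JMAlgebra n :=
  ⟨JM n b, Algebra.subset_adjoin ⟨b, rfl⟩⟩

open MvPolynomial
open scoped IsMulCommutative

theorem evalJM_eq_aeval (f : MvPolynomial (Fin n) ℂ) :
    evalJM f = (JMAlgebra n).val (aeval (JMAlgebra.gen n) f) := by
  rw [aeval_def, eval₂_eq', map_sum]
  refine sum_congr rfl fun d _ ↦ ?_
  rw [map_mul, AlgHom.commutes, Fin.prod_univ_def, map_list_prod, List.map_map,
    ← Algebra.smul_def]
  rfl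

theorem commute_of_swap_aeval_esymm {i j : Fin n} (hij : (j : ℕ) = i + 1) (k : ℕ) :
    Commute (of ℂ _ (swap i j))
      ((JMAlgebra n).val (aeval (JMAlgebra.gen n) (esymm (Fin n) ℂ k))) := by
  classical
  let B := (Subalgebra.centralizer ℂ {of ℂ _ (swap i j)}).comap (JMAlgebra n).val
  have hB (x : JMAlgebra n) : x ∈ B ↔ Commute (of ℂ _ (swap i j)) ((JMAlgebra n).val x) := by
    simp [B, Subalgebra.mem_centralizer_iff, Commute, SemiconjBy]
  have hne : i ≠ j := by rw [Fin.ne_iff_vne]; omega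
  have huniv : (univ.val : Multiset (Fin n)) = i ::ₘ j ::ₘ ((univ.val.erase i).erase j) := by
    rw [Multiset.cons_erase (Multiset.mem_erase_of_ne hne.symm |>.2 (mem_univ j)),
      Multiset.cons_erase (mem_univ i)]
  rw [← hB, aeval_esymm_eq_multiset_esymm, huniv, Multiset.map_cons, Multiset.map_cons]
  refine Multiset.esymm_cons_cons_mem (fun x hx ↦ ?_)
    ((hB (JMAlgebra.gen n i + JMAlgebra.gen n j)).2 (commute_of_swap_JM_add hij))
    ((hB (JMAlgebra.gen n i * JMAlgebra.gen n j)).2 (commute_of_swap_JM_mul hij)) k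
  obtain ⟨b, hb, rfl⟩ := Multiset.mem_map.1 hx
  rw [(univ.nodup.erase i).mem_erase_iff, univ.nodup.mem_erase_iff] at hb
  refine (hB _).2 (commute_of_swap_JM (Ne.symm hb.2.1) (Ne.symm hb.1) ?_)
  simp only [Fin.lt_def, hij]
  have := Fin.val_ne_of_ne hb.1
  omega

theorem aeval_esymm_JM_mem_center (k : ℕ) :
    (JMAlgebra n).val (aeval (JMAlgebra.gen n) (esymm (Fin n) ℂ k)) ∈
      Subalgebra.center ℂ (GroupAlg n) :=
  MonoidAlgebra.mem_center_of_closure_eq_top (Perm.mclosure_swap_adjacent n) <| by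
    rintro _ ⟨i, j, hij, rfl⟩
    exact commute_of_swap_aeval_esymm hij k

/-- every symmetric polynomial in the Jucys–Murphy elements lies in
the center `Z(ℂ[S_n])`. -/
theorem symmetric_jucysMurphy_mem_center {n : ℕ} (f : MvPolynomial (Fin n) ℂ)
    (hf : f.IsSymmetric) :
    evalJM f ∈ Subalgebra.center ℂ (GroupAlg n) := by
  rw [evalJM_eq_aeval]
  exact hf.aeval_mem (B := (Subalgebra.center ℂ (GroupAlg n)).comap (JMAlgebra n).val) _
    aeval_esymm_JM_mem_center
end

section
/- The dual Cauchy identity in the bases of elementary and monomial symmetric functions: ∏_{i,j} (1 + x_i y_j) = ∑_λ e_λ(x) m_λ(y), where the sum is over all partitions λ, e_λ = ∏_i e_{λ_i} is the product of elementary symmetric functions, and m_λ is the monomial symmetric function. -/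
open MvPolynomial Finset

/-!
For each `j`, `∏ᵢ (1 + xᵢ yⱼ) = ∑ₖ eₖ(x) yⱼᵏ`, so the whole product is the sum of
`∏ⱼ e_{f j}(x) yⱼ^{f j}` over exponent vectors `f` of the `y`-variables; vectors with an entry
beyond the number of `x`-variables contribute `0`. An exponent vector of total degree `d` is a
multiset of size `d`, and `∏ⱼ e_{f j}(x)` only depends on the partition `λ` of `d` formed by its
multiplicities. Grouping by `λ`, the `y`-monomials add up to `m_λ(y)` with common factor `e_λ(x)`.
-/

theorem Multiset.prod_map_eq_prod_pow_count {ι M : Type*} [Fintype ι] [DecidableEq ι]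
    [CommMonoid M] (s : Multiset ι) (f : ι → M) : (s.map f).prod = ∏ i, f i ^ s.count i := by
  rw [prod_multiset_map_count]
  exact prod_subset (subset_univ _) fun i _ hi => by
    rw [Multiset.count_eq_zero.2 (by simpa using hi), pow_zero]

theorem Sym.sum_count_eq_sum_piAntidiag {τ M : Type*} [Fintype τ] [DecidableEq τ]
    [AddCommMonoid M] (n : ℕ) (g : (τ → ℕ) → M) :
    ∑ s : Sym τ n, g (fun j => s.1.count j) = ∑ f ∈ piAntidiag univ n, g f := by
  rw [← sum_coe_sort (piAntidiag univ n)]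
  exact Fintype.sum_equiv ((Sym.equivNatSumOfFintype τ n).trans
    (Equiv.subtypeEquivRight fun f => by simp)) _ _ fun _ => rfl

theorem Finset.sum_piFinset_range_eq_sum_range_sum_piAntidiag {τ M : Type*} [Fintype τ]
    [DecidableEq τ] [AddCommMonoid M] (n : ℕ) (g : (τ → ℕ) → M)
    (hg : ∀ f j, n < f j → g f = 0) :
    ∑ f ∈ Fintype.piFinset (fun _ : τ => range (n + 1)), g f =
      ∑ d ∈ range (n * Fintype.card τ + 1), ∑ f ∈ piAntidiag univ d, g f := by
  have hsum : ∀ f ∈ Fintype.piFinset (fun _ : τ => range (n + 1)),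
      ∑ j, f j ∈ range (n * Fintype.card τ + 1) := by
    intro f hf
    simp only [Fintype.mem_piFinset, mem_range, Nat.lt_succ_iff] at hf ⊢
    simpa [mul_comm] using sum_le_card_nsmul univ f n fun j _ => hf j
  rw [← sum_fiberwise_of_maps_to hsum]
  refine sum_congr rfl fun d _ => sum_subset (fun f hf => by simp_all) fun f _ hf => ?_
  obtain ⟨j, hj⟩ : ∃ j, n < f j := by simp_all
  exact hg f j hj

namespace MvPolynomial

variable {σ τ R : Type*} [CommSemiring R] [Fintype σ]

theorem esymm_eq_zero_of_card_lt {k : ℕ} (hk : Fintype.card σ < k) : esymm σ R k = 0 := by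
  rw [esymm, powersetCard_eq_empty.2 (by simpa using hk), sum_empty]

theorem prod_one_add_mul_eq_sum_esymm {S : Type*} [CommSemiring S] [Algebra R S]
    (a : σ → S) (t : S) :
    ∏ i, (1 + a i * t) = ∑ k ∈ range (Fintype.card σ + 1), aeval a (esymm σ R k) * t ^ k := by
  rw [prod_one_add, sum_powerset]
  refine sum_congr rfl fun k _ => ?_
  simp only [esymm, map_sum, map_prod, aeval_X, sum_mul]
  refine sum_congr rfl fun A hA => ?_
  rw [prod_mul_distrib, prod_const, (mem_powersetCard.1 hA).2]

variable [Fintype τ] [DecidableEq τ]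

theorem esymmPart_ofSym {n : ℕ} (s : Sym τ n) :
    esymmPart σ R (Nat.Partition.ofSym s) = ∏ j, esymm σ R (s.1.count j) :=
  calc esymmPart σ R (Nat.Partition.ofSym s)
      = ∏ j ∈ s.1.toFinset, esymm σ R (s.1.count j) := by
        rw [esymmPart, Nat.Partition.ofSym, Multiset.map_map]; rfl
    _ = ∏ j, esymm σ R (s.1.count j) := prod_subset (subset_univ _) fun j _ hj => by
        rw [Multiset.count_eq_zero.2 (by simpa using hj), esymm_zero]

theorem sum_esymmPart_mul_msymm_eq_sum_sym (n : ℕ) :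
    ∑ μ : n.Partition,
        rename Sum.inl (esymmPart σ R μ) * rename (Sum.inr : τ → σ ⊕ τ) (msymm τ R μ) =
      ∑ s : Sym τ n,
        ∏ j, rename Sum.inl (esymm σ R (s.1.count j)) * X (Sum.inr j) ^ s.1.count j := by
  simp_rw [msymm, map_sum, mul_sum]
  rw [← Fintype.sum_fiberwise (fun s : Sym τ n => Nat.Partition.ofSym s)]
  refine sum_congr rfl fun μ _ => sum_congr rfl fun ⟨s, hs⟩ _ => ?_
  subst hs
  rw [esymmPart_ofSym, map_prod, map_multiset_prod, Multiset.map_map,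
    Multiset.prod_map_eq_prod_pow_count, ← prod_mul_distrib]
  simp only [Function.comp_apply, rename_X]

theorem prod_one_add_X_mul_X_eq_sum_esymmPart_mul_msymm :
    ∏ i : σ, ∏ j : τ, (1 + X (Sum.inl i) * X (Sum.inr j) : MvPolynomial (σ ⊕ τ) R) =
      ∑ d ∈ range (Fintype.card σ * Fintype.card τ + 1), ∑ μ : d.Partition,
        rename Sum.inl (esymmPart σ R μ) * rename Sum.inr (msymm τ R μ) := by
  let T : (τ → ℕ) → MvPolynomial (σ ⊕ τ) R := fun f =>
    ∏ j, rename Sum.inl (esymm σ R (f j)) * X (Sum.inr j) ^ f j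
  calc _ = ∏ j : τ, ∑ k ∈ range (Fintype.card σ + 1),
        rename Sum.inl (esymm σ R k) * X (Sum.inr j) ^ k := by
        rw [prod_comm]
        simp_rw [rename_eq_aeval]
        exact prod_congr rfl fun j _ => prod_one_add_mul_eq_sum_esymm _ _
    _ = ∑ f ∈ Fintype.piFinset (fun _ : τ => range (Fintype.card σ + 1)), T f :=
        prod_univ_sum _ _
    _ = ∑ d ∈ range (Fintype.card σ * Fintype.card τ + 1), ∑ f ∈ piAntidiag univ d, T f :=
        sum_piFinset_range_eq_sum_range_sum_piAntidiag _ _ fun f j hj =>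
          prod_eq_zero (mem_univ j) (by rw [esymm_eq_zero_of_card_lt hj, map_zero, zero_mul])
    _ = _ := sum_congr rfl fun d _ => by
        rw [sum_esymmPart_mul_msymm_eq_sum_sym, Sym.sum_count_eq_sum_piAntidiag d T]

end MvPolynomial

-- For `|λ| > N·M`, either a part of `λ` exceeds `N`, so `e_λ(x) = 0`, or `λ` has more than `M`
-- parts, so `m_λ(y) = 0`; this is why the degrees `d` stop at `N·M`.
/-- dual Cauchy identity, in the bases of elementary and monomial
symmetric functions, for variable sets `x = (x_1, …, x_N)`, `y = (y_1, …, y_M)`: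
`∏_{i,j} (1 + x_i y_j) = ∑_λ e_λ(x) m_λ(y)`. Only partitions `λ` with `|λ| ≤ N·M`
contribute (for larger `λ`, `e_λ(x) m_λ(y) = 0`), so the sum over all partitions is
written as the finite sum over partitions of each `d ≤ N·M`. -/
theorem dual_cauchy_esymm_msymm (N M : ℕ) :
    (∏ i : Fin N, ∏ j : Fin M,
        (1 + X (Sum.inl i) * X (Sum.inr j) : MvPolynomial (Fin N ⊕ Fin M) ℚ)) =
      ∑ d ∈ Finset.range (N * M + 1), ∑ μ : Nat.Partition d,
        rename (Sum.inl : Fin N → Fin N ⊕ Fin M) (esymmPart (Fin N) ℚ μ) *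
          rename (Sum.inr : Fin M → Fin N ⊕ Fin M) (msymm (Fin M) ℚ μ) := by
  simpa only [Fintype.card_fin] using
    prod_one_add_X_mul_X_eq_sum_esymmPart_mul_msymm (σ := Fin N) (τ := Fin M) (R := ℚ)
end

section
/- Symmetrized strictly-ordered geometric sum identity: for indeterminates x_1, ..., x_k with |x_i| < 1, ∑_{σ ∈ S_k} ∑_{0 ≤ i_1 < i_2 < ... < i_k} x_{σ(1)}^{i_1} ⋯ x_{σ(k)}^{i_k} = ∑_{σ ∈ S_k} (x_{σ(1)}^{k−1} x_{σ(2)}^{k−2} ⋯ x_{σ(k−1)}) / ((1 − x_{σ(1)})(1 − x_{σ(1)}x_{σ(2)}) ⋯ (1 − x_{σ(1)}⋯x_{σ(k)})). -/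
/-!
Writing a strictly increasing `t : Fin (n + 1) → ℕ` as `Fin.cons a (a + 1 + t')` with `t'` strictly
increasing, and recursing, is the substitution `t j = j + g 0 + ⋯ + g j` with `g` arbitrary. It
turns `∑_t ∏ y_j ^ t_j` into a product of geometric series in the suffix products `y_i ⋯ y_{k-1}`.
The result, `∏ y_j ^ j / ∏_i (1 - y_i ⋯ y_{k-1})`, is not the summand on the right-hand side for
the same `σ`, but it is the one for `σ ∘ rev`, so the two symmetrized sums agree.
-/

open Finset

def strictMonoConsEquiv (n : ℕ) :
    ℕ × {g : Fin n → ℕ // StrictMono g} ≃ {f : Fin (n + 1) → ℕ // StrictMono f} where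
  toFun p := ⟨Fin.cons p.1 fun j => p.1 + 1 + p.2.1 j,
    Fin.strictMono_cons.2 ⟨fun _ => by omega, fun _ _ hij => by simpa using p.2.2 hij⟩⟩
  invFun f := (f.1 0, ⟨fun j : Fin n => f.1 j.succ - (f.1 0 + 1), fun i j hij => by
    have h0i := f.2 (Fin.succ_pos i)
    have hij' := f.2 (Fin.succ_lt_succ_iff.2 hij)
    simp only
    omega⟩)
  left_inv p := by ext <;> simp
  right_inv f := by
    ext j
    refine Fin.cases (by simp) (fun i => ?_) j
    have h0i := f.2 (Fin.succ_pos i)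
    simp only [Fin.cons_succ]
    omega

theorem prod_pow_strictMonoConsEquiv {M : Type*} [CommMonoid M] {n : ℕ} (y : Fin (n + 1) → M)
    (p : ℕ × {g : Fin n → ℕ // StrictMono g}) :
    ∏ j, y j ^ (strictMonoConsEquiv n p).1 j =
      (∏ j, y j) ^ p.1 * ((∏ j : Fin n, y j.succ) * ∏ j : Fin n, y j.succ ^ p.2.1 j) := by
  simp only [strictMonoConsEquiv, Equiv.coe_fn_mk, Fin.prod_univ_succ, Fin.cons_zero,
    Fin.cons_succ, pow_add, pow_succ, prod_mul_distrib, prod_pow, mul_pow]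
  ac_rfl

namespace Fin

variable {M : Type*} [CommMonoid M] {n : ℕ}

theorem norm_prod_lt_one {𝕜 : Type*} [NormedField 𝕜] {y : Fin (n + 1) → 𝕜}
    (hy : ∀ i, ‖y i‖ < 1) : ‖∏ i, y i‖ < 1 :=
  calc ‖∏ i, y i‖ = ‖y 0‖ * ∏ i : Fin n, ‖y i.succ‖ := by
        rw [prod_univ_succ, norm_mul, norm_prod]
    _ ≤ ‖y 0‖ := mul_le_of_le_one_right (norm_nonneg _)
        (prod_le_one (fun _ _ => norm_nonneg _) fun i _ => (hy _).le)
    _ < 1 := hy 0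

theorem prod_Iic_rev (y : Fin n → M) (m : Fin n) :
    ∏ j ∈ Iic m, y j.rev = ∏ j ∈ Ici m.rev, y j := by
  rw [← map_revPerm_Iic, prod_map]
  rfl

theorem prod_pow_val_eq_prod_rev_pow (y : Fin n → M) :
    ∏ j, y j ^ (j : ℕ) = ∏ j : Fin n, y j.rev ^ (n - 1 - (j : ℕ)) :=
  Fintype.prod_equiv revPerm _ _ fun j => by
    rw [revPerm_apply, rev_rev, val_rev]
    congr 1
    omega

end Fin

section StrictMonoSum

variable {𝕜 : Type*} [NormedField 𝕜]

theorem summable_norm_prod_pow_strictMono :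
    ∀ {n : ℕ} {y : Fin n → 𝕜}, (∀ i, ‖y i‖ < 1) →
      Summable fun t : {f : Fin n → ℕ // StrictMono f} => ‖∏ j, y j ^ t.1 j‖
  | 0, _, _ => .of_finite
  | n + 1, y, hy => by
    rw [← (strictMonoConsEquiv n).summable_iff]
    simp only [Function.comp_def, prod_pow_strictMonoConsEquiv, norm_mul, norm_pow]
    exact (summable_geometric_of_lt_one (norm_nonneg _) (Fin.norm_prod_lt_one hy)).mul_of_nonneg
      ((summable_norm_prod_pow_strictMono fun i => hy i.succ).mul_left _)
      (fun _ => by positivity) fun _ => by positivity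

theorem tsum_prod_pow_strictMono [CompleteSpace 𝕜] :
    ∀ {n : ℕ} {y : Fin n → 𝕜}, (∀ i, ‖y i‖ < 1) →
      ∑' t : {f : Fin n → ℕ // StrictMono f}, ∏ j, y j ^ t.1 j =
        (∏ j, y j ^ (j : ℕ)) / ∏ i, (1 - ∏ j ∈ Ici i, y j)
  | 0, _, _ => by simp [Subsingleton.strictMono]
  | n + 1, y, hy => by
    have hhead : Summable fun a : ℕ => ‖(∏ j, y j) ^ a‖ := by
      simpa only [norm_pow] using
        summable_geometric_of_lt_one (norm_nonneg _) (Fin.norm_prod_lt_one hy)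
    have htail : Summable fun t : {g : Fin n → ℕ // StrictMono g} =>
        ‖(∏ j : Fin n, y j.succ) * ∏ j, y j.succ ^ t.1 j‖ := by
      simpa only [norm_mul] using
        (summable_norm_prod_pow_strictMono fun i => hy i.succ).mul_left _
    rw [← (strictMonoConsEquiv n).tsum_eq]
    simp only [prod_pow_strictMonoConsEquiv]
    rw [← tsum_mul_tsum_of_summable_norm hhead htail,
      tsum_geometric_of_norm_lt_one (Fin.norm_prod_lt_one hy), tsum_mul_left,
      tsum_prod_pow_strictMono fun i => hy i.succ,
      Fin.prod_univ_succ (fun j => y j ^ (j : ℕ)), Fin.prod_univ_succ (fun i => 1 - ∏ j ∈ Ici i, y j)]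
    simp only [Fin.prod_Ici_succ, Fin.val_zero, pow_zero, one_mul, Fin.val_succ, pow_succ,
      prod_mul_distrib]
    rw [← bot_eq_zero, Ici_bot, div_eq_mul_inv, div_eq_mul_inv, mul_inv]
    ring

end StrictMonoSum

theorem symmetrized_strict_geometric_sum_general (k : ℕ) (x : Fin k → ℂ)
    (h1 : ∀ i, ‖x i‖ < 1) :
    (∑ σ : Equiv.Perm (Fin k),
        ∑' t : {f : Fin k → ℕ // StrictMono f}, ∏ j : Fin k, x (σ j) ^ (t.1 j)) =
      ∑ σ : Equiv.Perm (Fin k),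
        (∏ j : Fin k, x (σ j) ^ (k - 1 - (j : ℕ))) /
          ∏ m : Fin k, (1 - ∏ j ∈ Finset.univ.filter (fun j : Fin k => j ≤ m), x (σ j)) := by
  calc _ = ∑ σ : Equiv.Perm (Fin k),
          (∏ j, x (σ j) ^ (j : ℕ)) / ∏ i, (1 - ∏ j ∈ Ici i, x (σ j)) :=
        sum_congr rfl fun σ _ => tsum_prod_pow_strictMono fun i => h1 (σ i)
    _ = ∑ σ : Equiv.Perm (Fin k), (∏ j : Fin k, x (σ j.rev) ^ (k - 1 - (j : ℕ))) /
          ∏ m : Fin k, (1 - ∏ j ∈ univ.filter (· ≤ m), x (σ j.rev)) := by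
        refine sum_congr rfl fun σ _ => ?_
        rw [Fin.prod_pow_val_eq_prod_rev_pow,
          ← Equiv.prod_comp Fin.revPerm (fun i => 1 - ∏ j ∈ Ici i, x (σ j))]
        simp only [filter_ge_eq_Iic, Fin.revPerm_apply, Fin.prod_Iic_rev (fun j => x (σ j))]
    _ = _ := Fintype.sum_equiv (Equiv.mulRight Fin.revPerm) _ _ fun _ => rfl

/-- symmetrized strictly-ordered geometric sum identity: for complex
numbers `x_1, …, x_k` with `0 < |x_i| < 1`,
`∑_{σ ∈ S_k} ∑_{0 ≤ i_1 < ⋯ < i_k} x_{σ(1)}^{i_1} ⋯ x_{σ(k)}^{i_k}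
 = ∑_{σ ∈ S_k} (x_{σ(1)}^{k-1} x_{σ(2)}^{k-2} ⋯ x_{σ(k-1)}) /
   ((1 - x_{σ(1)})(1 - x_{σ(1)}x_{σ(2)}) ⋯ (1 - x_{σ(1)} ⋯ x_{σ(k)}))`. -/
theorem symmetrized_strict_geometric_sum (k : ℕ) (x : Fin k → ℂ)
    (h0 : ∀ i, 0 < ‖x i‖) (h1 : ∀ i, ‖x i‖ < 1) :
    (∑ σ : Equiv.Perm (Fin k),
        ∑' t : {f : Fin k → ℕ // StrictMono f}, ∏ j : Fin k, x (σ j) ^ (t.1 j)) =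
      ∑ σ : Equiv.Perm (Fin k),
        (∏ j : Fin k, x (σ j) ^ (k - 1 - (j : ℕ))) /
          ∏ m : Fin k, (1 - ∏ j ∈ Finset.univ.filter (fun j : Fin k => j ≤ m), x (σ j)) :=
  symmetrized_strict_geometric_sum_general k x h1
end
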